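/- Let a : [0,∞) → (0,∞) be a C² solution of the scale-factor equation ä(t) + (4π/3) a(t)^{−2} = 0. Define F(t, x, v) = π^{−3/2} exp(−a(t)² |v − (ȧ(t)/a(t)) x|²), ρ(t, x) = a(t)^{−3}, and φ(t, x) = (2π/3) a(t)^{−3} |x|² for t ≥ 0 and x, v ∈ ℝ³. Then: (i) ∫_{ℝ³} F(t, x, v) dv = ρ(t, x); (ii) Δ_x φ(t, x) = 4π ρ(t, x); (iii) F(t, x, u′) F(t, x, v′) = F(t, x, u) F(t, x, v) for all u, v ∈ ℝ³ and ω ∈ 𝕊², so the Boltzmann collision integral ∫_{ℝ³×𝕊²} |u − v|^γ B(ω) ( F(t,x,u′)F(t,x,v′) − F(t,x,u)F(t,x,v) ) dω du vanishes identically; and (iv) ∂_t F + v·∇_x F − ∇_x φ·∇_v F = 0. Hence (F, ρ, φ) is an exact solution of the Vlasov–Poisson–Boltzmann system. -/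

import Mathlib

/-! `F(t, x, ·)` is a Maxwellian `K exp(-A |v - H x|²)` with `A = a²` and bulk velocity `H x`,
where `H = ȧ/a` is the Hubble rate. Collisions conserve momentum and energy, so every Maxwellian
`M` satisfies `M(u′) M(v′) = M(u) M(v)` and the collision integrand vanishes pointwise. Inserting the
Maxwellian into the Vlasov operator with the harmonic potential `k |x|²` leaves the Maxwellian
times `(2 A H - Ȧ) |v - H x|² + 2 A (Ḣ + H² + 2 k) ⟪v - H x, x⟫`. The first coefficient vanishes
for `A = a²`, and `Ḣ + H² = ä/a = -(4π/3) a⁻³ = -2 k` by the scale-factor equation. -/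

open MeasureTheory Real Set

noncomputable section

abbrev R3 := EuclideanSpace ℝ (Fin 3)

abbrev Sphere2 := Metric.sphere (0 : R3) 1

/-- The surface measure dω on 𝕊². -/
def sphMeasure : Measure Sphere2 := (volume : Measure R3).toSphere

/-- Post-collision velocity u′ = u + ((v − u)·ω)ω. -/
def uPost (u v : R3) (ω : Sphere2) : R3 := u + (inner ℝ (v - u) (ω : R3) : ℝ) • (ω : R3)

/-- Post-collision velocity v′ = v + ((u − v)·ω)ω. -/
def vPost (u v : R3) (ω : Sphere2) : R3 := v + (inner ℝ (u - v) (ω : R3) : ℝ) • (ω : R3)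

/-- First-order partial derivative in the i-th coordinate direction. -/
def pd (i : Fin 3) (g : R3 → ℝ) : R3 → ℝ :=
  fun x => fderiv ℝ g x (EuclideanSpace.single i 1)

def maxwellian (K A : ℝ) (b w : R3) : ℝ := K * exp (-A * ‖w - b‖ ^ 2)

lemma sum_mul_pd_eq_fderiv (g : R3 → ℝ) (x y : R3) : ∑ i, y i * pd i g x = fderiv ℝ g x y := by
  conv_rhs => rw [← (EuclideanSpace.basisFun (Fin 3) ℝ).sum_repr y]
  simp [pd]

lemma pd_const_mul_norm_sq (k : ℝ) (i : Fin 3) :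
    pd i (fun y : R3 => k * ‖y‖ ^ 2) = fun y => 2 * k * y i := by
  funext y
  rw [pd, ((hasStrictFDerivAt_norm_sq y).hasFDerivAt.const_mul k).fderiv]
  simp only [smul_apply, coe_innerSL_apply, EuclideanSpace.inner_single_right, ringHom_apply,
    one_mul, nsmul_eq_mul, Nat.cast_ofNat, smul_eq_mul]
  ring

lemma pd_const_mul_coord (c : ℝ) (i : Fin 3) (x : R3) : pd i (fun y : R3 => c * y i) x = c := by
  have h : HasFDerivAt (fun y : R3 => c * y i) (c • EuclideanSpace.proj (𝕜 := ℝ) i) x :=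
    (EuclideanSpace.proj (𝕜 := ℝ) (ι := Fin 3) i).hasFDerivAt.const_mul c
  rw [pd, h.fderiv]
  simp

lemma laplacian_const_mul_norm_sq (k : ℝ) (x : R3) :
    ∑ i, pd i (pd i (fun y : R3 => k * ‖y‖ ^ 2)) x = 6 * k := by
  simp only [pd_const_mul_norm_sq, pd_const_mul_coord, Finset.sum_const, Finset.card_univ,
    Fintype.card_fin, nsmul_eq_mul]
  ring

lemma uPost_add_vPost (u v : R3) (ω : Sphere2) : uPost u v ω + vPost u v ω = u + v := by
  have : inner ℝ (u - v) (ω : R3) = -inner ℝ (v - u) (ω : R3) := by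
    rw [← inner_neg_left, neg_sub]
  rw [uPost, vPost, this, neg_smul]
  abel

lemma norm_uPost_sq_add_norm_vPost_sq (u v : R3) (ω : Sphere2) :
    ‖uPost u v ω‖ ^ 2 + ‖vPost u v ω‖ ^ 2 = ‖u‖ ^ 2 + ‖v‖ ^ 2 := by
  have hω : ‖(ω : R3)‖ = 1 := norm_eq_of_mem_sphere ω
  simp only [uPost, vPost, norm_add_sq_real, norm_smul, hω, inner_smul_right, inner_sub_left,
    Real.norm_eq_abs, sq_abs, mul_one]
  ring

lemma norm_uPost_sub_sq_add_norm_vPost_sub_sq (u v w : R3) (ω : Sphere2) :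
    ‖uPost u v ω - w‖ ^ 2 + ‖vPost u v ω - w‖ ^ 2 = ‖u - w‖ ^ 2 + ‖v - w‖ ^ 2 := by
  have hsum := congrArg (inner ℝ · w) (uPost_add_vPost u v ω)
  simp only [inner_add_left] at hsum
  simp only [norm_sub_sq_real]
  linear_combination norm_uPost_sq_add_norm_vPost_sq u v ω - 2 * hsum

lemma maxwellian_uPost_mul_maxwellian_vPost (K A : ℝ) (b u v : R3) (ω : Sphere2) :
    maxwellian K A b (uPost u v ω) * maxwellian K A b (vPost u v ω)
      = maxwellian K A b u * maxwellian K A b v := by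
  have hprod : ∀ p q : R3, maxwellian K A b p * maxwellian K A b q
      = K ^ 2 * exp (-A * (‖p - b‖ ^ 2 + ‖q - b‖ ^ 2)) := fun p q => by
    rw [maxwellian, maxwellian, mul_add, exp_add]; ring
  rw [hprod, hprod, norm_uPost_sub_sq_add_norm_vPost_sub_sq]

lemma integral_maxwellian (K : ℝ) {A : ℝ} (hA : 0 < A) (b : R3) :
    ∫ w, maxwellian K A b w = K * (π / A) ^ (3 / 2 : ℝ) := by
  simp only [maxwellian]
  rw [integral_const_mul, integral_sub_right_eq_self (fun w : R3 => exp (-A * ‖w‖ ^ 2)) b,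
    GaussianFourier.integral_rexp_neg_mul_sq_norm hA, finrank_euclideanSpace_fin]
  norm_num

lemma integral_maxwellian_normalized {a : ℝ} (ha : 0 < a) (b : R3) :
    ∫ w, maxwellian (π ^ (-(3 : ℝ) / 2)) (a ^ 2) b w = a ^ (-3 : ℤ) := by
  have ha3 : (a ^ 2) ^ (3 / 2 : ℝ) = a ^ 3 := by
    rw [← rpow_natCast a 2, ← rpow_mul ha.le]
    norm_num
  rw [integral_maxwellian _ (by positivity), div_rpow pi_nonneg (by positivity), ha3, neg_div,
    rpow_neg pi_nonneg, zpow_neg]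
  have : π ^ (3 / 2 : ℝ) ≠ 0 := by positivity
  field_simp

lemma hasFDerivAt_const_mul_exp_neg_mul_norm_sq {E F : Type*} [NormedAddCommGroup E]
    [NormedSpace ℝ E] [NormedAddCommGroup F] [InnerProductSpace ℝ F] {f : E → F}
    {f' : E →L[ℝ] F} {y : E} (K A : ℝ) (hf : HasFDerivAt f f' y) :
    HasFDerivAt (fun y => K * exp (-A * ‖f y‖ ^ 2))
      ((-2 * A * (K * exp (-A * ‖f y‖ ^ 2))) • (innerSL ℝ (f y)).comp f') y := by
  have h := HasFDerivAt.const_mul (HasFDerivAt.exp (hf.norm_sq.const_mul (-A))) K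
  refine h.congr_fderiv ?_
  ext z
  simp only [smul_apply, ContinuousLinearMap.comp_apply, coe_innerSL_apply, nsmul_eq_mul,
    Nat.cast_ofNat, smul_eq_mul]
  ring

lemma fderiv_maxwellian (K A : ℝ) (b v : R3) :
    fderiv ℝ (maxwellian K A b) v = (-2 * A * maxwellian K A b v) • innerSL ℝ (v - b) := by
  have h := hasFDerivAt_const_mul_exp_neg_mul_norm_sq K A ((hasFDerivAt_id v).sub_const b)
  rw [ContinuousLinearMap.comp_id] at h
  exact h.fderiv

lemma fderiv_maxwellian_smul_center (K A c : ℝ) (v x : R3) :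
    fderiv ℝ (fun y => maxwellian K A (c • y) v) x
      = (2 * A * c * maxwellian K A (c • x) v) • innerSL ℝ (v - c • x) := by
  have h := hasFDerivAt_const_mul_exp_neg_mul_norm_sq K A (f := fun y : R3 => v - c • y)
    (((hasFDerivAt_id x).const_smul c).const_sub v)
  rw [show (fun y => maxwellian K A (c • y) v) = fun y => K * exp (-A * ‖v - c • y‖ ^ 2) from rfl,
    h.fderiv]
  ext z
  simp only [maxwellian, ContinuousLinearMap.comp_neg, ContinuousLinearMap.comp_smulₛₗ,
    ringHom_apply, ContinuousLinearMap.comp_id, neg_apply, smul_apply, coe_innerSL_apply,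
    smul_eq_mul]
  ring

lemma hasDerivAt_maxwellian_of_center {A : ℝ → ℝ} {b : ℝ → R3} {A' t : ℝ} {b' : R3}
    (hA : HasDerivAt A A' t) (hb : HasDerivAt b b' t) (K : ℝ) (w : R3) :
    HasDerivAt (fun s => maxwellian K (A s) (b s) w)
      ((2 * A t * inner ℝ (w - b t) b' - A' * ‖w - b t‖ ^ 2) * maxwellian K (A t) (b t) w) t := by
  have h : HasDerivAt (fun s => K * exp (-A s * ‖w - b s‖ ^ 2)) _ t :=
    ((hA.fun_neg.fun_mul (hb.const_sub w).norm_sq).exp).const_mul K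
  refine h.congr_deriv ?_
  simp only [maxwellian, inner_neg_right]
  ring

lemma vlasov_maxwellian {A H : ℝ → ℝ} {t A' H' k : ℝ} (hA : HasDerivAt A A' t)
    (hH : HasDerivAt H H' t) (hA' : A' = 2 * A t * H t) (hH' : H' + H t ^ 2 + 2 * k = 0)
    (K : ℝ) (x v : R3) :
    deriv (fun s => maxwellian K (A s) (H s • x) v) t
      + ∑ i, v i * pd i (fun y => maxwellian K (A t) (H t • y) v) x
      - ∑ i, pd i (fun y : R3 => k * ‖y‖ ^ 2) x * pd i (maxwellian K (A t) (H t • x)) v = 0 := by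
  have hforce : ∑ i, pd i (fun y : R3 => k * ‖y‖ ^ 2) x * pd i (maxwellian K (A t) (H t • x)) v
      = fderiv ℝ (maxwellian K (A t) (H t • x)) v ((2 * k) • x) := by
    simp only [← sum_mul_pd_eq_fderiv, pd_const_mul_norm_sq, PiLp.smul_apply, smul_eq_mul]
  have hv : inner ℝ (v - H t • x) v = ‖v - H t • x‖ ^ 2 + H t * inner ℝ (v - H t • x) x := by
    nth_rewrite 2 [← sub_add_cancel v (H t • x)]
    rw [inner_add_right, real_inner_self_eq_norm_sq, inner_smul_right]
  rw [(hasDerivAt_maxwellian_of_center hA (hH.smul_const x) K v).deriv, sum_mul_pd_eq_fderiv,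
    fderiv_maxwellian_smul_center, hforce, fderiv_maxwellian]
  simp only [smul_apply, innerSL_apply_apply, smul_eq_mul, inner_smul_right]
  linear_combination (2 * A t * H t * maxwellian K (A t) (H t • x) v) * hv
    - ‖v - H t • x‖ ^ 2 * maxwellian K (A t) (H t • x) v * hA'
    + 2 * A t * inner ℝ (v - H t • x) x * maxwellian K (A t) (H t • x) v * hH'

lemma hubble_deriv_add_sq {a a' a'' : ℝ} (ha : a ≠ 0)
    (hODE : a'' + 4 * π / 3 * a ^ (-2 : ℤ) = 0) :
    (a'' * a - a' * a') / a ^ 2 + (a' / a) ^ 2 + 2 * (2 * π / 3 * a ^ (-3 : ℤ)) = 0 := by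
  simp only [zpow_neg, zpow_ofNat] at hODE ⊢
  field_simp at hODE ⊢
  linear_combination hODE

theorem exact_VPB_solution_general
    (γ : ℝ)
    (B : Sphere2 → ℝ)
    (a a' a'' : ℝ → ℝ)
    (hpos : ∀ t ∈ Ici (0 : ℝ), 0 < a t)
    (ha : ∀ t ∈ Ici (0 : ℝ), HasDerivAt a (a' t) t)
    (ha' : ∀ t ∈ Ici (0 : ℝ), HasDerivAt a' (a'' t) t)
    (hODE : ∀ t ∈ Ici (0 : ℝ), a'' t + (4 * π / 3) * (a t) ^ (-2 : ℤ) = 0)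
    (F : ℝ → R3 → R3 → ℝ)
    (hF : F = fun t x v =>
      π ^ (-(3 : ℝ) / 2) * Real.exp (-(a t) ^ 2 * ‖v - (a' t / a t) • x‖ ^ 2))
    (ρ : ℝ → R3 → ℝ) (hρ : ρ = fun t _ => (a t) ^ (-3 : ℤ))
    (φ : ℝ → R3 → ℝ) (hφ : φ = fun t x => (2 * π / 3) * (a t) ^ (-3 : ℤ) * ‖x‖ ^ 2) :
    ∀ t ∈ Ici (0 : ℝ), ∀ x : R3,
      -- (i) the velocity integral of F is ρ
      (∫ v : R3, F t x v) = ρ t x ∧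
      -- (ii) Poisson's equation Δₓφ = 4πρ
      (∑ i : Fin 3, pd i (pd i (φ t)) x) = 4 * π * ρ t x ∧
      -- (iii) pointwise collision invariance and vanishing of the collision integral
      (∀ u v : R3, ∀ ω : Sphere2,
        F t x (uPost u v ω) * F t x (vPost u v ω) = F t x u * F t x v) ∧
      (∀ v : R3,
        (∫ u : R3, ∫ ω : Sphere2, ‖u - v‖ ^ γ * B ω *
          (F t x (uPost u v ω) * F t x (vPost u v ω) - F t x u * F t x v)
            ∂sphMeasure) = 0) ∧
      -- (iv) the Vlasov equation
      (∀ v : R3,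
        deriv (fun s => F s x v) t
          + (∑ i : Fin 3, v i * pd i (fun y => F t y v) x)
          - (∑ i : Fin 3, pd i (φ t) x * pd i (F t x) v) = 0) := by
  intro t ht x
  have hM : F = fun t x => maxwellian (π ^ (-(3 : ℝ) / 2)) (a t ^ 2) ((a' t / a t) • x) := hF
  subst hM hρ hφ
  have h0 : a t ≠ 0 := (hpos t ht).ne'
  have hcoll := maxwellian_uPost_mul_maxwellian_vPost (π ^ (-(3 : ℝ) / 2)) (a t ^ 2)
    ((a' t / a t) • x)
  refine ⟨integral_maxwellian_normalized (hpos t ht) _, ?_, hcoll, fun v => ?_, fun v => ?_⟩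
  · beta_reduce
    rw [laplacian_const_mul_norm_sq]
    ring
  · simp only [hcoll, sub_self, mul_zero, integral_zero]
  · have hA' : (2 : ℕ) * a t ^ (2 - 1) * a' t = 2 * a t ^ 2 * (a' t / a t) := by
      field_simp
      ring
    exact vlasov_maxwellian ((ha t ht).pow 2) ((ha' t ht).div (ha t ht) h0) hA'
      (hubble_deriv_add_sq h0 (hODE t ht)) _ x v

/-- For a C² solution `a` of the scale-factor equation
`ä + (4π/3)a⁻² = 0`, the triple
`F(t,x,v) = π^{−3/2} exp(−a(t)²|v − (ȧ/a)x|²)`, `ρ(t,x) = a(t)⁻³`,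
`φ(t,x) = (2π/3) a(t)⁻³ |x|²` is an exact solution of the Vlasov–Poisson–Boltzmann
system: (i) `∫ F dv = ρ`; (ii) `Δₓφ = 4πρ`; (iii) the collision integrand and the
collision integral vanish; (iv) the Vlasov equation `∂ₜF + v·∇ₓF − ∇ₓφ·∇_vF = 0` holds. -/
theorem exact_VPB_solution
    (γ : ℝ) (hγ : γ ∈ Set.Ioo (-3 : ℝ) 0)
    (B : Sphere2 → ℝ) (C₀ : ℝ) (hC₀ : 0 < C₀) (hB : Measurable B)
    (hBbd : ∀ ω, 0 ≤ B ω ∧ B ω ≤ C₀)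
    (a a' a'' : ℝ → ℝ)
    (hpos : ∀ t ∈ Ici (0 : ℝ), 0 < a t)
    (ha : ∀ t ∈ Ici (0 : ℝ), HasDerivAt a (a' t) t)
    (ha' : ∀ t ∈ Ici (0 : ℝ), HasDerivAt a' (a'' t) t)
    (ha'' : ContinuousOn a'' (Ici 0))
    (hODE : ∀ t ∈ Ici (0 : ℝ), a'' t + (4 * π / 3) * (a t) ^ (-2 : ℤ) = 0)
    (F : ℝ → R3 → R3 → ℝ)
    (hF : F = fun t x v =>
      π ^ (-(3 : ℝ) / 2) * Real.exp (-(a t) ^ 2 * ‖v - (a' t / a t) • x‖ ^ 2))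
    (ρ : ℝ → R3 → ℝ) (hρ : ρ = fun t _ => (a t) ^ (-3 : ℤ))
    (φ : ℝ → R3 → ℝ) (hφ : φ = fun t x => (2 * π / 3) * (a t) ^ (-3 : ℤ) * ‖x‖ ^ 2) :
    ∀ t ∈ Ici (0 : ℝ), ∀ x : R3,
      -- (i) the velocity integral of F is ρ
      (∫ v : R3, F t x v) = ρ t x ∧
      -- (ii) Poisson's equation Δₓφ = 4πρ
      (∑ i : Fin 3, pd i (pd i (φ t)) x) = 4 * π * ρ t x ∧
      -- (iii) pointwise collision invariance and vanishing of the collision integral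
      (∀ u v : R3, ∀ ω : Sphere2,
        F t x (uPost u v ω) * F t x (vPost u v ω) = F t x u * F t x v) ∧
      (∀ v : R3,
        (∫ u : R3, ∫ ω : Sphere2, ‖u - v‖ ^ γ * B ω *
          (F t x (uPost u v ω) * F t x (vPost u v ω) - F t x u * F t x v)
            ∂sphMeasure) = 0) ∧
      -- (iv) the Vlasov equation
      (∀ v : R3,
        deriv (fun s => F s x v) t
          + (∑ i : Fin 3, v i * pd i (fun y => F t y v) x)
          - (∑ i : Fin 3, pd i (φ t) x * pd i (F t x) v) = 0) :=
  exact_VPB_solution_general γ B a a' a'' hpos ha ha' hODE F hF ρ hρ φ hφ
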